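/- arXiv:1504.01564 — 2 statements merged into one kernel-verified Lean document; each statement's English description precedes it below -/
import Mathlib

section
/- Let X be a Banach space and (x_k), (y_k) Schauder basic sequences in X such that (x_k) admits an ℓ_1 spreading model while (y_k) does not admit an ℓ_1 spreading model. Then the difference sequence (x_k − y_k) admits an ℓ_1 spreading model. -/
/-!
Pass to a subsequence of `x` generating an `ℓ₁` spreading model with constant `c`. A basic
sequence whose norms grow geometrically generates an `ℓ₁` spreading model, because its
coefficients are controlled by the basis constant; this survives subtracting a bounded
sequence. Hence, if `x - y` had no `ℓ₁` spreading model, both `y` and `x` would be bounded along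
a further subsequence, and it suffices to show that a sum `y + z` of two bounded sequences
without `ℓ₁` spreading model (here `z = x - y`) has none either.

For that, Ramsey's theorem yields a subsequence along which the norm of every normalized
combination depends, up to `c / 8`, only on its coefficients and not on its (spread) positions.
Take normalized combinations `d` of `y` and `a` of `z` of norm `< c / 8`. The combination with
coefficients `dⱼ aᵢ` on an `m × n` grid is normalized, its columns are copies of `d` on `y` and
its rows copies of `a` on `z`, so its norm on `y + z` is at most `c / 2 < c`.
-/

variable {X : Type*} [NormedAddCommGroup X] [NormedSpace ℝ X]

/-- `(e_k)` is a Schauder basic sequence. -/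
def IsBasicSeq (e : ℕ → X) : Prop :=
  (∀ k, e k ≠ 0) ∧ ∃ C : ℝ, 1 ≤ C ∧ ∀ (m n : ℕ), m ≤ n → ∀ a : ℕ → ℝ,
    ‖∑ i ∈ Finset.range m, a i • e i‖ ≤ C * ‖∑ i ∈ Finset.range n, a i • e i‖

/-- `(x_k)` generates an `ℓ₁` spreading model: there is `c > 0` so that for
every `n` and indices `n ≤ k_1 < ⋯ < k_n`,
`‖∑ a_i x_{k_i}‖ ≥ c ∑ |a_i|`. -/
def GeneratesL1SM (x : ℕ → X) : Prop :=
  ∃ c : ℝ, 0 < c ∧ ∀ (n : ℕ) (k : ℕ → ℕ), StrictMono k → n ≤ k 0 →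
    ∀ a : ℕ → ℝ,
      c * ∑ i ∈ Finset.range n, |a i| ≤
        ‖∑ i ∈ Finset.range n, a i • x (k i)‖

/-- `(x_k)` admits an `ℓ₁` spreading model: some subsequence generates one. -/
def AdmitsL1SM (x : ℕ → X) : Prop :=
  ∃ φ : ℕ → ℕ, StrictMono φ ∧ GeneratesL1SM (fun k => x (φ k))

open Finset Filter

theorem Set.Infinite.exists_antitone_chain {P : ℕ → Set ℕ → Set ℕ → Prop} {S : Set ℕ}
    (hS : S.Infinite) (step : ∀ n A, A.Infinite → ∃ B ⊆ A, B.Infinite ∧ P n A B) :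
    ∃ A : ℕ → Set ℕ, A 0 = S ∧ Antitone A ∧ (∀ n, (A n).Infinite) ∧
      ∀ n, P n (A n) (A (n + 1)) := by
  choose F hFsub hFinf hP using step
  let A : ℕ → {A : Set ℕ // A.Infinite} := fun n =>
    Nat.rec ⟨S, hS⟩ (fun n A => ⟨F n A.1 A.2, hFinf n A.1 A.2⟩) n
  exact ⟨fun n => (A n).1, rfl, antitone_nat_of_succ_le fun n => hFsub n _ _,
    fun n => (A n).2, fun n => hP n _ _⟩

theorem Set.Infinite.exists_monochromatic (r : ℕ) {κ : Type*} [Finite κ]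
    (c : (Fin r → ℕ) → κ) {S : Set ℕ} (hS : S.Infinite) :
    ∃ T ⊆ S, T.Infinite ∧ ∃ k, ∀ v : Fin r → ℕ, StrictMono v → (∀ i, v i ∈ T) → c v = k := by
  induction r generalizing S with
  | zero => exact ⟨S, subset_rfl, hS, c Fin.elim0, fun v _ _ => congrArg c (Subsingleton.elim _ _)⟩
  | succ r ih =>
    have step : ∀ (_ : ℕ) (A : Set ℕ), A.Infinite → ∃ B ⊆ A, B.Infinite ∧
        ∃ a ∈ A, (∀ b ∈ B, a < b) ∧
          ∃ k, ∀ v : Fin r → ℕ, StrictMono v → (∀ i, v i ∈ B) → c (Fin.cons a v) = k := by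
      intro _ A hA
      obtain ⟨a, ha⟩ := hA.nonempty
      obtain ⟨B, hBA, hB, k, hk⟩ := ih (fun v => c (Fin.cons a v)) (hA.sdiff (Set.finite_Iic a))
      exact ⟨B, fun b hb => (hBA hb).1, hB, a, ha, fun b hb => not_le.1 (hBA hb).2, k, hk⟩
    obtain ⟨A, hA0, hAanti, -, hstep⟩ := hS.exists_antitone_chain step
    choose a haA hlt k hk using hstep
    have ha : StrictMono a := strictMono_nat_of_lt_succ fun n => hlt n _ (haA (n + 1))
    obtain ⟨k₀, hk₀⟩ := Finite.exists_infinite_fiber k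
    refine ⟨a '' (k ⁻¹' {k₀}), ?_, (Set.infinite_coe_iff.1 hk₀).image ha.injective.injOn, k₀, ?_⟩
    · rintro _ ⟨n, -, rfl⟩
      exact hA0 ▸ hAanti (Nat.zero_le n) (haA n)
    · intro v hv hvT
      obtain ⟨n, hn, hvn⟩ := hvT 0
      have htail : ∀ i, Fin.tail v i ∈ A (n + 1) := by
        intro i
        obtain ⟨m, -, hvm⟩ := hvT i.succ
        have : a n < a m := hvn ▸ hvm ▸ hv (Fin.succ_pos i)
        rw [Fin.tail, ← hvm]
        exact hAanti (ha.lt_iff_lt.1 this) (haA m)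
      have := hk n (Fin.tail v) (fun i j hij => hv (Fin.succ_lt_succ_iff.2 hij)) htail
      rwa [hvn, Fin.cons_self_tail, hn] at this

theorem Set.Infinite.exists_forall_dist_lt {E : Type*} [PseudoMetricSpace E] (r : ℕ)
    {s : Set E} (hs : TotallyBounded s) {c : (Fin r → ℕ) → E} (hc : ∀ v, c v ∈ s)
    {ε : ℝ} (hε : 0 < ε) {S : Set ℕ} (hS : S.Infinite) :
    ∃ T ⊆ S, T.Infinite ∧ ∀ v v' : Fin r → ℕ, StrictMono v → StrictMono v' →
      (∀ i, v i ∈ T) → (∀ i, v' i ∈ T) → dist (c v) (c v') < ε := by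
  obtain ⟨t, -, ht, hst⟩ := Metric.finite_approx_of_totallyBounded hs (ε / 2) (half_pos hε)
  have hcover : ∀ v, ∃ y : t, dist (c v) y < ε / 2 := fun v => by
    obtain ⟨y, hy, hvy⟩ := Set.mem_iUnion₂.1 (hst (hc v))
    exact ⟨⟨y, hy⟩, hvy⟩
  choose center hcenter using hcover
  have := ht.to_subtype
  obtain ⟨T, hTS, hT, y, hy⟩ := hS.exists_monochromatic r center
  refine ⟨T, hTS, hT, fun v v' hv hv' hvT hv'T => ?_⟩
  calc dist (c v) (c v') ≤ dist (c v) y + dist (c v') y := dist_triangle_right _ _ _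
    _ < ε / 2 + ε / 2 := by
        gcongr
        · exact hy v hv hvT ▸ hcenter v
        · exact hy v' hv' hv'T ▸ hcenter v'
    _ = ε := add_halves ε

theorem exists_strictMono_forall_image_Ici {Good : ℕ → Set ℕ → Prop}
    (anti : ∀ n ⦃T T'⦄, T ⊆ T' → Good n T' → Good n T)
    (exists_good : ∀ n S, S.Infinite → ∃ T ⊆ S, T.Infinite ∧ Good n T) :
    ∃ ψ : ℕ → ℕ, StrictMono ψ ∧ ∀ n, Good n (ψ '' Set.Ici n) := by
  obtain ⟨A, -, hAanti, hAinf, hAgood⟩ :=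
    Set.infinite_univ.exists_antitone_chain (P := fun n _ B => Good n B) exists_good
  obtain ⟨ψ, hψ, hψA⟩ := extraction_forall_of_frequently
    fun n => Nat.frequently_atTop_iff_infinite.2 (hAinf (n + 1))
  refine ⟨ψ, hψ, fun n => anti n ?_ (hAgood n)⟩
  rintro _ ⟨k, hk, rfl⟩
  exact hAanti (Nat.succ_le_succ hk) (hψA k)

theorem norm_sum_smul_le_sum_abs_mul {ι : Type*} {s : Finset ι} {a : ι → ℝ} {u : ι → X} {M : ℝ}
    (hu : ∀ i ∈ s, ‖u i‖ ≤ M) : ‖∑ i ∈ s, a i • u i‖ ≤ (∑ i ∈ s, |a i|) * M := by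
  rw [sum_mul]
  refine (norm_sum_le _ _).trans (sum_le_sum fun i hi => ?_)
  rw [norm_smul, Real.norm_eq_abs]
  exact mul_le_mul_of_nonneg_left (hu i hi) (abs_nonneg _)

theorem norm_sum_fin_smul_le {n : ℕ} (a : Fin n → ℝ) {u : Fin n → X} {B : ℝ}
    (hu : ∀ i, ‖u i‖ ≤ B) : ‖∑ i, a i • u i‖ ≤ n * ‖a‖ * B := by
  rcases n.eq_zero_or_pos with rfl | hn
  · simp
  have hB : 0 ≤ B := (norm_nonneg _).trans (hu ⟨0, hn⟩)
  calc _ ≤ (∑ i, |a i|) * B := norm_sum_smul_le_sum_abs_mul fun i _ => hu i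
    _ ≤ (∑ _i : Fin n, ‖a‖) * B := by
        gcongr with i
        exact Real.norm_eq_abs (a i) ▸ norm_le_pi_norm a i
    _ = n * ‖a‖ * B := by simp

theorem sum_range_mul_eq_sum_sum {M : Type*} [AddCommMonoid M] (f : ℕ → M) (m n : ℕ) :
    ∑ t ∈ range (m * n), f t = ∑ j ∈ range m, ∑ i ∈ range n, f (n * j + i) := by
  induction m with
  | zero => simp
  | succ m ih => rw [Nat.succ_mul, sum_range_add, ih, sum_range_succ, mul_comm n m]

theorem GeneratesL1SM.comp_strictMono {x : ℕ → X} (h : GeneratesL1SM x) {φ : ℕ → ℕ}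
    (hφ : StrictMono φ) : GeneratesL1SM (fun k => x (φ k)) := by
  obtain ⟨c, hc, hx⟩ := h
  exact ⟨c, hc, fun n k hk hn a => hx n (φ ∘ k) (hφ.comp hk) (hn.trans hφ.le_apply) a⟩

theorem AdmitsL1SM.of_comp {x : ℕ → X} {φ : ℕ → ℕ} (hφ : StrictMono φ)
    (h : AdmitsL1SM (fun k => x (φ k))) : AdmitsL1SM x := by
  obtain ⟨ψ, hψ, hgen⟩ := h
  exact ⟨φ ∘ ψ, hφ.comp hψ, hgen⟩

theorem GeneratesL1SM.exists_small_combination {w : ℕ → X} (h : ¬ GeneratesL1SM w) {δ : ℝ}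
    (hδ : 0 < δ) : ∃ (n : ℕ) (k : ℕ → ℕ) (a : ℕ → ℝ), StrictMono k ∧ n ≤ k 0 ∧
      ∑ i ∈ range n, |a i| = 1 ∧ ‖∑ i ∈ range n, a i • w (k i)‖ < δ := by
  simp only [GeneratesL1SM, not_exists, not_and, not_forall, not_le] at h
  obtain ⟨n, k, hk, hn, a, ha⟩ := h δ hδ
  set s := ∑ i ∈ range n, |a i|
  have hs : 0 < s := pos_of_mul_pos_right ((norm_nonneg _).trans_lt ha) hδ.le
  refine ⟨n, k, fun i => s⁻¹ * a i, hk, hn, ?_, ?_⟩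
  · simp only [abs_mul, abs_inv, abs_of_pos hs, ← mul_sum]
    exact inv_mul_cancel₀ hs.ne'
  · simp only [mul_smul, ← smul_sum, norm_smul, norm_inv, Real.norm_eq_abs, abs_of_pos hs]
    rw [inv_mul_lt_iff₀ hs, mul_comm]
    exact ha

def HasBasisConstant (e : ℕ → X) (C : ℝ) : Prop :=
  ∀ m n : ℕ, m ≤ n → ∀ a : ℕ → ℝ,
    ‖∑ i ∈ range m, a i • e i‖ ≤ C * ‖∑ i ∈ range n, a i • e i‖

theorem sum_range_smul_comp_eq {e : ℕ → X} {u : ℕ → ℕ} (hu : StrictMono u) (a : ℕ → ℝ)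
    (m : ℕ) :
    ∑ i ∈ range m, a i • e (u i) = ∑ t ∈ range (u m), Function.extend u a 0 t • e t := by
  have himage : (range m).image u ⊆ range (u m) := by
    simp only [image_subset_iff, mem_range]
    exact fun i hi => hu hi
  rw [← sum_subset himage, sum_image hu.injective.injOn]
  · exact sum_congr rfl fun i _ => by rw [hu.injective.extend_apply]
  · intro t ht hti
    rw [Function.extend_apply', Pi.zero_apply, zero_smul]
    rintro ⟨i, rfl⟩
    exact hti (mem_image_of_mem u (mem_range.2 (hu.lt_iff_lt.1 (mem_range.1 ht))))

namespace HasBasisConstant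

variable {e : ℕ → X} {C : ℝ}

theorem comp_strictMono (h : HasBasisConstant e C) {u : ℕ → ℕ} (hu : StrictMono u) :
    HasBasisConstant (fun k => e (u k)) C := fun m n hmn a => by
  simpa only [sum_range_smul_comp_eq hu] using h (u m) (u n) (hu.monotone hmn) _

theorem abs_mul_norm_le (h : HasBasisConstant e C) (a : ℕ → ℝ) {j n : ℕ} (hj : j < n) :
    |a j| * ‖e j‖ ≤ 2 * C * ‖∑ i ∈ range n, a i • e i‖ := by
  rw [← Real.norm_eq_abs, ← norm_smul, ← sum_range_succ_sub_sum fun i => a i • e i]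
  calc _ ≤ ‖∑ i ∈ range (j + 1), a i • e i‖ + ‖∑ i ∈ range j, a i • e i‖ := norm_sub_le _ _
    _ ≤ C * ‖∑ i ∈ range n, a i • e i‖ + C * ‖∑ i ∈ range n, a i • e i‖ :=
        add_le_add (h _ _ hj a) (h _ _ hj.le a)
    _ = _ := by ring

theorem mul_sum_abs_le (h : HasBasisConstant e C) (hC : 0 < C) {L : ℝ}
    (hgrow : ∀ i, 4 * C * L * 2 ^ i ≤ ‖e i‖) (n : ℕ) (a : ℕ → ℝ) :
    L * ∑ i ∈ range n, |a i| ≤ ‖∑ i ∈ range n, a i • e i‖ := by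
  set S := ‖∑ i ∈ range n, a i • e i‖
  have hterm : ∀ i ∈ range n, L * |a i| ≤ S / 2 * (1 / 2) ^ i := by
    intro i hi
    have hcoeff := (mul_le_mul_of_nonneg_left (hgrow i) (abs_nonneg (a i))).trans
      (h.abs_mul_norm_le a (mem_range.1 hi))
    have hscaled : L * |a i| * 2 ^ i ≤ S / 2 :=
      le_of_mul_le_mul_left (by linarith) (by positivity : 0 < 4 * C)
    calc L * |a i| = L * |a i| * 2 ^ i * (1 / 2) ^ i := by
          rw [mul_assoc _ ((2 : ℝ) ^ i), ← mul_pow]; norm_num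
      _ ≤ S / 2 * (1 / 2) ^ i := by gcongr
  calc L * ∑ i ∈ range n, |a i| = ∑ i ∈ range n, L * |a i| := mul_sum _ _ _
    _ ≤ ∑ i ∈ range n, S / 2 * (1 / 2) ^ i := sum_le_sum hterm
    _ ≤ S / 2 * 2 := by rw [← mul_sum]; gcongr; exact sum_geometric_two_le n
    _ = S := by ring

end HasBasisConstant

theorem generatesL1SM_sub_of_fast_growth {w v : ℕ → X} {C M : ℝ} (hw : HasBasisConstant w C)
    (hC : 0 < C) (hgrow : ∀ k, 4 * C * (M + 1) * 2 ^ k ≤ ‖w k‖) (hv : ∀ k, ‖v k‖ ≤ M) :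
    GeneratesL1SM (fun k => w k - v k) := by
  refine ⟨1, one_pos, fun n q hq _ a => ?_⟩
  have hM : 0 ≤ M := (norm_nonneg _).trans (hv 0)
  have hlow := (hw.comp_strictMono hq).mul_sum_abs_le hC
    (fun i => le_trans (by gcongr; exacts [one_le_two, hq.le_apply]) (hgrow (q i))) n a
  have hup : ‖∑ i ∈ range n, a i • v (q i)‖ ≤ (∑ i ∈ range n, |a i|) * M :=
    norm_sum_smul_le_sum_abs_mul fun i _ => hv (q i)
  calc 1 * ∑ i ∈ range n, |a i|
      ≤ ‖∑ i ∈ range n, a i • w (q i)‖ - ‖∑ i ∈ range n, a i • v (q i)‖ := by linarith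
    _ ≤ ‖∑ i ∈ range n, a i • (w (q i) - v (q i))‖ := by
        simpa only [smul_sub, sum_sub_distrib] using norm_sub_norm_le _ _

theorem exists_bounded_subseq_of_not_admitsL1SM_sub {w v : ℕ → X} {C M : ℝ}
    (hw : HasBasisConstant w C) (hC : 0 < C) (hv : ∀ k, ‖v k‖ ≤ M)
    (h : ¬ AdmitsL1SM (fun k => w k - v k)) :
    ∃ φ : ℕ → ℕ, StrictMono φ ∧ ∃ B, ∀ k, ‖w (φ k)‖ ≤ B := by
  by_cases htends : Tendsto (fun k => ‖w k‖) atTop atTop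
  · obtain ⟨φ, hφ, hgrow⟩ := extraction_forall_of_eventually
      fun k => htends.eventually_ge_atTop (4 * C * (M + 1) * 2 ^ k)
    exact absurd ⟨φ, hφ, generatesL1SM_sub_of_fast_growth (hw.comp_strictMono hφ) hC hgrow
      fun k => hv (φ k)⟩ h
  · simp only [tendsto_atTop, not_forall, not_eventually, not_le] at htends
    obtain ⟨B, hB⟩ := htends
    obtain ⟨φ, hφ, hφB⟩ := extraction_of_frequently_atTop hB
    exact ⟨φ, hφ, B, fun k => (hφB k).le⟩

def SpreadStableOn (w : ℕ → X) (ε : ℝ) (n : ℕ) (T : Set ℕ) : Prop :=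
  ∀ v v' : Fin n → ℕ, StrictMono v → StrictMono v' → (∀ i, v i ∈ T) → (∀ i, v' i ∈ T) →
    ∀ a : Fin n → ℝ, ‖a‖ ≤ 1 → ‖∑ i, a i • w (v i)‖ ≤ ‖∑ i, a i • w (v' i)‖ + ε

/-- A finitary substitute for passing to the spreading model, which is 1-spreading. -/
def SpreadStable (w : ℕ → X) (ε : ℝ) : Prop :=
  ∀ (n : ℕ) (a : ℕ → ℝ), ∑ i ∈ range n, |a i| ≤ 1 → ∀ q q' : ℕ → ℕ, StrictMono q →
    StrictMono q' → n ≤ q 0 → n ≤ q' 0 →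
      ‖∑ i ∈ range n, a i • w (q i)‖ ≤ ‖∑ i ∈ range n, a i • w (q' i)‖ + ε

theorem SpreadStable.comp_strictMono {w : ℕ → X} {ε : ℝ} (h : SpreadStable w ε) {ρ : ℕ → ℕ}
    (hρ : StrictMono ρ) : SpreadStable (fun k => w (ρ k)) ε :=
  fun n a ha q q' hq hq' hn hn' => h n a ha (ρ ∘ q) (ρ ∘ q') (hρ.comp hq) (hρ.comp hq')
    (hn.trans hρ.le_apply) (hn'.trans hρ.le_apply)

/-- Ramsey's theorem applied to the norms of the combinations with coefficients in a finite
net of the unit ball stabilizes all combinations up to the mesh of the net. -/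
theorem Set.Infinite.exists_spreadStableOn {w : ℕ → X} {B : ℝ} (hB : ∀ k, ‖w k‖ ≤ B) {ε : ℝ}
    (hε : 0 < ε) (n : ℕ) {S : Set ℕ} (hS : S.Infinite) :
    ∃ T ⊆ S, T.Infinite ∧ SpreadStableOn w ε n T := by
  have hB0 : 0 ≤ B := (norm_nonneg _).trans (hB 0)
  set δ := ε / (3 * (n * B + 1)) with hδdef
  have hδ : 0 < δ := by positivity
  obtain ⟨t, hts, ht, hnet⟩ := Metric.finite_approx_of_totallyBounded
    (isCompact_closedBall (0 : Fin n → ℝ) 1).totallyBounded δ hδ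
  have := ht.fintype
  let c : (Fin n → ℕ) → t → ℝ := fun v z => ‖∑ i, (z : Fin n → ℝ) i • w (v i)‖
  have hc : ∀ v, c v ∈ Metric.closedBall 0 (n * B) := by
    intro v
    rw [mem_closedBall_zero_iff, pi_norm_le_iff_of_nonneg (by positivity)]
    intro z
    rw [Real.norm_eq_abs, abs_norm]
    have hz : ‖(z : Fin n → ℝ)‖ ≤ 1 := mem_closedBall_zero_iff.1 (hts z.2)
    calc _ ≤ n * ‖(z : Fin n → ℝ)‖ * B := norm_sum_fin_smul_le _ fun i => hB _
      _ ≤ n * 1 * B := by gcongr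
      _ = n * B := by ring
  obtain ⟨T, hTS, hT, hTc⟩ := hS.exists_forall_dist_lt n
    (isCompact_closedBall _ _).totallyBounded hc (by positivity : 0 < ε / 3)
  refine ⟨T, hTS, hT, fun v v' hv hv' hvT hv'T a ha => ?_⟩
  obtain ⟨z, hz, haz⟩ := Set.mem_iUnion₂.1 (hnet (mem_closedBall_zero_iff.2 ha))
  have happrox : ∀ u : Fin n → ℕ,
      |‖∑ i, a i • w (u i)‖ - ‖∑ i, z i • w (u i)‖| ≤ ε / 3 := fun u =>
    calc _ ≤ ‖∑ i, a i • w (u i) - ∑ i, z i • w (u i)‖ := abs_norm_sub_norm_le _ _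
      _ = ‖∑ i, (a - z) i • w (u i)‖ := by simp only [Pi.sub_apply, sub_smul, sum_sub_distrib]
      _ ≤ n * ‖a - z‖ * B := norm_sum_fin_smul_le _ fun i => hB _
      _ ≤ n * δ * B := by gcongr; exact (mem_ball_iff_norm.1 haz).le
      _ = ε / 3 * (n * B / (n * B + 1)) := by rw [hδdef]; field_simp
      _ ≤ ε / 3 := mul_le_of_le_one_right (by positivity) (div_le_one_of_le₀ (by linarith)
          (by positivity))
  have hcolor : |‖∑ i, z i • w (v i)‖ - ‖∑ i, z i • w (v' i)‖| < ε / 3 :=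
    (dist_le_pi_dist (c v) (c v') ⟨z, hz⟩).trans_lt (hTc v v' hv hv' hvT hv'T)
  linarith [abs_le.1 (happrox v), abs_le.1 (happrox v'), abs_lt.1 hcolor]

theorem exists_strictMono_spreadStable {w : ℕ → X} {B : ℝ} (hB : ∀ k, ‖w k‖ ≤ B) {ε : ℝ}
    (hε : 0 < ε) : ∃ ψ : ℕ → ℕ, StrictMono ψ ∧ SpreadStable (fun k => w (ψ k)) ε := by
  obtain ⟨ψ, hψ, hstable⟩ := exists_strictMono_forall_image_Ici (Good := SpreadStableOn w ε)
    (fun n T T' hTT' h v v' hv hv' hvT hv'T => h v v' hv hv' (fun i => hTT' (hvT i))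
      (fun i => hTT' (hv'T i)))
    (fun n S hS => hS.exists_spreadStableOn hB hε n)
  refine ⟨ψ, hψ, fun n a ha q q' hq hq' hn hn' => ?_⟩
  have hmem : ∀ u : ℕ → ℕ, StrictMono u → n ≤ u 0 → ∀ i : Fin n, ψ (u i) ∈ ψ '' Set.Ici n :=
    fun u hu hn i => ⟨u i, hn.trans (hu.monotone (Nat.zero_le _)), rfl⟩
  have hcoeff : ‖fun i : Fin n => a i‖ ≤ 1 := by
    refine (pi_norm_le_iff_of_nonneg zero_le_one).2 fun i => ?_
    rw [Real.norm_eq_abs]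
    exact (single_le_sum (fun j _ => abs_nonneg (a j)) (mem_range.2 i.2)).trans ha
  simp only [← Fin.sum_univ_eq_sum_range (fun i => a i • w (ψ (q i))),
    ← Fin.sum_univ_eq_sum_range (fun i => a i • w (ψ (q' i)))]
  exact hstable n _ _ (hψ.comp (hq.comp Fin.val_strictMono)) (hψ.comp (hq'.comp Fin.val_strictMono))
    (hmem q hq hn) (hmem q' hq' hn') _ hcoeff

theorem exists_small_combination_add {y z : ℕ → X} {m n : ℕ} {d a : ℕ → ℝ} {δ : ℝ}
    (hd : ∑ j ∈ range m, |d j| = 1) (ha : ∑ i ∈ range n, |a i| = 1)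
    (hy : ∀ q : ℕ → ℕ, StrictMono q → m ≤ q 0 → ‖∑ j ∈ range m, d j • y (q j)‖ ≤ δ)
    (hz : ∀ q : ℕ → ℕ, StrictMono q → n ≤ q 0 → ‖∑ i ∈ range n, a i • z (q i)‖ ≤ δ) :
    ∃ (N : ℕ) (k : ℕ → ℕ) (b : ℕ → ℝ), StrictMono k ∧ N ≤ k 0 ∧
      ∑ t ∈ range N, |b t| = 1 ∧ ‖∑ t ∈ range N, b t • (y (k t) + z (k t))‖ ≤ 2 * δ := by
  have hn : 0 < n := Nat.pos_of_ne_zero (by rintro rfl; simp at ha)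
  set T := m * n + m + n
  set b : ℕ → ℝ := fun t => d (t / n) * a (t % n)
  have hb : ∀ j, ∀ i ∈ range n, b (n * j + i) = d j * a i := fun j i hi => by
    simp only [b, Nat.mul_add_div hn, Nat.div_eq_of_lt (mem_range.1 hi), add_zero,
      Nat.mul_add_mod, Nat.mod_eq_of_lt (mem_range.1 hi)]
  have hcol : ∀ i ∈ range n, ‖∑ j ∈ range m, d j • y (T + (n * j + i))‖ ≤ δ := fun i _ =>
    hy _ (fun j j' hjj' => by gcongr) (by omega)
  have hrow : ∀ j ∈ range m, ‖∑ i ∈ range n, a i • z (T + (n * j + i))‖ ≤ δ := fun j _ =>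
    hz _ (fun i i' hii' => by gcongr) (by omega)
  refine ⟨m * n, fun t => T + t, b, strictMono_id.const_add T,
    show m * n ≤ T + 0 by omega, ?_, ?_⟩
  · rw [sum_range_mul_eq_sum_sum, ← one_mul (1 : ℝ)]
    nth_rw 1 [← hd, ← ha]
    rw [sum_mul_sum]
    exact sum_congr rfl fun j _ => sum_congr rfl fun i hi => by rw [hb j i hi, abs_mul]
  · have hsplit : ∑ t ∈ range (m * n), b t • (y (T + t) + z (T + t)) =
        ∑ i ∈ range n, a i • ∑ j ∈ range m, d j • y (T + (n * j + i)) +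
          ∑ j ∈ range m, d j • ∑ i ∈ range n, a i • z (T + (n * j + i)) := by
      simp only [smul_add, sum_add_distrib, sum_range_mul_eq_sum_sum, smul_sum, ← mul_smul]
      rw [sum_comm (s := range m)]
      congr 1
      · exact sum_congr rfl fun i hi => sum_congr rfl fun j _ => by rw [hb j i hi, mul_comm]
      · exact sum_congr rfl fun j _ => sum_congr rfl fun i hi => by rw [hb j i hi]
    rw [hsplit, two_mul]
    refine (norm_add_le _ _).trans (add_le_add ?_ ?_)
    · simpa only [ha, one_mul] using norm_sum_smul_le_sum_abs_mul (a := a) hcol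
    · simpa only [hd, one_mul] using norm_sum_smul_le_sum_abs_mul (a := d) hrow

theorem not_generatesL1SM_add {y z : ℕ → X} {By Bz : ℝ} (hyB : ∀ k, ‖y k‖ ≤ By)
    (hzB : ∀ k, ‖z k‖ ≤ Bz) (hy : ¬ AdmitsL1SM y) (hz : ¬ AdmitsL1SM z) :
    ¬ GeneratesL1SM (fun k => y k + z k) := by
  rintro ⟨c, hc, hgen⟩
  have hc8 : 0 < c / 8 := by positivity
  obtain ⟨ψ₁, hψ₁, hstab₁⟩ := exists_strictMono_spreadStable hyB hc8
  obtain ⟨ψ₂, hψ₂, hstab₂⟩ := exists_strictMono_spreadStable (fun k => hzB (ψ₁ k)) hc8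
  set ψ : ℕ → ℕ := fun k => ψ₁ (ψ₂ k)
  have hψ : StrictMono ψ := hψ₁.comp hψ₂
  have hstab₁' : SpreadStable (fun k => y (ψ k)) (c / 8) := hstab₁.comp_strictMono hψ₂
  obtain ⟨m, kd, d, hkd, hm, hd, hdsmall⟩ :=
    GeneratesL1SM.exists_small_combination (fun h => hy ⟨ψ, hψ, h⟩) hc8
  obtain ⟨n, ka, a, hka, hn, ha, hasmall⟩ :=
    GeneratesL1SM.exists_small_combination (fun h => hz ⟨ψ, hψ, h⟩) hc8
  obtain ⟨N, k, b, hk, hN, hb, hsmall⟩ :=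
    exists_small_combination_add (y := fun k => y (ψ k)) (z := fun k => z (ψ k))
      (δ := c / 4) hd ha
      (fun q hq hq0 => by linarith [hstab₁' m d hd.le q kd hq hkd hq0 hm])
      (fun q hq hq0 => by linarith [hstab₂ n a ha.le q ka hq hka hq0 hn])
  have hlow := hgen N (ψ ∘ k) (hψ.comp hk) (hN.trans hψ.le_apply) b
  rw [hb] at hlow
  linarith [hlow.trans hsmall]

/-- If `(x_k)` admits an `ℓ₁` spreading model and `(y_k)` does not, then
`(x_k − y_k)` admits an `ℓ₁` spreading model. -/
theorem sub_admits_l1_spreading_model (x y : ℕ → X)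
    (hx : IsBasicSeq x) (hy : IsBasicSeq y)
    (h1 : AdmitsL1SM x) (h2 : ¬ AdmitsL1SM y) :
    AdmitsL1SM (fun k => x k - y k) := by
  obtain ⟨φ₀, hφ₀, hgen⟩ := h1
  obtain ⟨-, Cx, hCx, hxC⟩ := hx
  obtain ⟨-, Cy, hCy, hyC⟩ := hy
  have hy₀ : ¬ AdmitsL1SM (fun k => y (φ₀ k) - 0) := by
    simpa only [sub_zero] using mt (AdmitsL1SM.of_comp hφ₀) h2
  obtain ⟨φ₁, hφ₁, My, hMy⟩ := exists_bounded_subseq_of_not_admitsL1SM_sub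
    (HasBasisConstant.comp_strictMono hyC hφ₀) (by linarith) (fun _ => norm_zero.le) hy₀
  by_contra h3
  have hφ₀₁ : StrictMono fun k => φ₀ (φ₁ k) := hφ₀.comp hφ₁
  obtain ⟨φ₂, hφ₂, Mx, hMx⟩ := exists_bounded_subseq_of_not_admitsL1SM_sub
    (HasBasisConstant.comp_strictMono hxC hφ₀₁) (by linarith) hMy
    (mt (AdmitsL1SM.of_comp (x := fun k => x k - y k) hφ₀₁) h3)
  set Φ : ℕ → ℕ := fun k => φ₀ (φ₁ (φ₂ k))
  have hΦ : StrictMono Φ := hφ₀₁.comp hφ₂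
  refine not_generatesL1SM_add (y := fun k => y (Φ k)) (z := fun k => x (Φ k) - y (Φ k))
    (fun k => hMy (φ₂ k)) (fun k => (norm_sub_le _ _).trans (add_le_add (hMx k) (hMy (φ₂ k))))
    (mt (AdmitsL1SM.of_comp hΦ) h2) (mt (AdmitsL1SM.of_comp (x := fun k => x k - y k) hΦ) h3) ?_
  simpa only [add_sub_cancel] using
    (hgen.comp_strictMono (hφ₁.comp hφ₂) : GeneratesL1SM fun k => x (Φ k))
end

section
/- Let X be a Banach space whose every non-trivial weakly Cauchy sequence has a convex block sequence generating the summing basis of c_0 as a spreading model, and let T : X → X be a bounded operator such that for every sequence (y_k) in X generating the unit vector basis of c_0 as a spreading model, (T y_k) is norm null. If (x_k) is a sequence in X such that both (x_k) and (T x_k) are non-trivial weakly Cauchy, derive a contradiction; in particular, such a T is weakly compact whenever X contains no sequence of this kind, i.e., T maps bounded sets to relatively weakly compact sets provided ℓ_1 does not embed in X. -/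
/-!
Pass to a convex block sequence `(z_k)` of `(x_k)` generating the summing basis. Then `(T z_k)`
is still non-trivial weakly Cauchy, hence not norm Cauchy, so along a subsequence `φ` consecutive
terms of `(T z_k)` stay `ε` apart. The differences `z_{φ(2k)} - z_{φ(2k+1)}` generate the unit
vector basis of `c₀`: testing the summing-basis estimate on the coefficients
`(a₀, -a₀, a₁, -a₁, …)`, whose partial sums are alternately `0` and `a_i`, turns the summing norm
into the sup norm. So their images under `T` are norm null, contradicting the `ε`-separation.
-/

open Filter Topology

variable {X : Type*} [NormedAddCommGroup X] [NormedSpace ℝ X]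

/-- A sequence is norm null if `‖x_k‖ → 0`. -/
def NormNull (x : ℕ → X) : Prop :=
  Tendsto (fun k => ‖x k‖) atTop (nhds 0)

/-- `(x_k)` is non-trivial weakly Cauchy: weakly Cauchy but not weakly
convergent. -/
def NontrivWeaklyCauchy (x : ℕ → X) : Prop :=
  (∀ g : X →L[ℝ] ℝ, ∃ L : ℝ, Tendsto (fun k => g (x k)) atTop (nhds L)) ∧
  ¬ ∃ z : X, ∀ g : X →L[ℝ] ℝ, Tendsto (fun k => g (x k)) atTop (nhds (g z))

/-- `(z_k)` is a convex block sequence of `(x_k)`. -/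
def IsConvexBlockSeq (x z : ℕ → X) : Prop :=
  ∃ (F : ℕ → Finset ℕ) (c : ℕ → ℝ),
    (∀ k, (F k).Nonempty) ∧
    (∀ k l, k < l → ∀ a ∈ F k, ∀ b ∈ F l, a < b) ∧
    (∀ i, 0 ≤ c i) ∧
    (∀ k, ∑ i ∈ F k, c i = 1) ∧
    (∀ k, z k = ∑ i ∈ F k, c i • x i)

/-- `(z_k)` generates the summing basis of `c₀` as a spreading model. -/
def GeneratesSummingSM (z : ℕ → X) : Prop :=
  ∃ C : ℝ, 1 ≤ C ∧ ∀ (n : ℕ) (k : ℕ → ℕ), StrictMono k → n ≤ k 0 →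
    ∀ a : ℕ → ℝ,
      ‖∑ i ∈ Finset.range n, a i • z (k i)‖ ≤
        C * (⨆ m ∈ Finset.range (n + 1), |∑ i ∈ Finset.range m, a i|) ∧
      (⨆ m ∈ Finset.range (n + 1), |∑ i ∈ Finset.range m, a i|) ≤
        C * ‖∑ i ∈ Finset.range n, a i • z (k i)‖

/-- `(y_k)` generates the unit vector basis of `c₀` as a spreading model. -/
def GeneratesC0SM (y : ℕ → X) : Prop :=
  ∃ C : ℝ, 1 ≤ C ∧ ∀ (n : ℕ) (k : ℕ → ℕ), StrictMono k → n ≤ k 0 →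
    ∀ a : ℕ → ℝ,
      ‖∑ i ∈ Finset.range n, a i • y (k i)‖ ≤
          C * (⨆ i ∈ Finset.range n, |a i|) ∧
      (⨆ i ∈ Finset.range n, |a i|) ≤
          C * ‖∑ i ∈ Finset.range n, a i • y (k i)‖

open Finset

theorem le_of_mem_of_ordered_blocks {F : ℕ → Finset ℕ} (hne : ∀ k, (F k).Nonempty)
    (hord : ∀ k l, k < l → ∀ a ∈ F k, ∀ b ∈ F l, a < b) : ∀ {k a}, a ∈ F k → k ≤ a
  | 0, _, _ => Nat.zero_le _
  | k + 1, a, ha => by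
    obtain ⟨b, hb⟩ := hne k
    have := le_of_mem_of_ordered_blocks hne hord hb
    have := hord k (k + 1) k.lt_succ_self b hb a ha
    omega

namespace IsConvexBlockSeq

variable {Y : Type*} [NormedAddCommGroup Y] [NormedSpace ℝ Y] {x z : ℕ → X}

theorem map (h : IsConvexBlockSeq x z) (f : X →L[ℝ] Y) :
    IsConvexBlockSeq (fun k => f (x k)) (fun k => f (z k)) := by
  obtain ⟨F, c, hne, hord, hc0, hc1, hz⟩ := h
  exact ⟨F, c, hne, hord, hc0, hc1, fun k => by simp only [hz k, map_sum, map_smul]⟩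

theorem tendsto (h : IsConvexBlockSeq x z) {L : X} (hx : Tendsto x atTop (𝓝 L)) :
    Tendsto z atTop (𝓝 L) := by
  obtain ⟨F, c, hne, hord, hc0, hc1, hz⟩ := h
  rw [Metric.tendsto_atTop] at hx ⊢
  intro ε hε
  obtain ⟨N, hN⟩ := hx ε hε
  refine ⟨N, fun k hk => ?_⟩
  rw [hz k, ← Metric.mem_ball]
  exact (convex_ball L ε).sum_mem (fun i _ => hc0 i) (hc1 k)
    fun i hi => hN i (hk.trans (le_of_mem_of_ordered_blocks hne hord hi))

theorem nontrivWeaklyCauchy (h : IsConvexBlockSeq x z) (hx : NontrivWeaklyCauchy x) :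
    NontrivWeaklyCauchy z := by
  refine ⟨fun g => (hx.1 g).imp fun L hL => (h.map g).tendsto hL, ?_⟩
  rintro ⟨w, hw⟩
  refine hx.2 ⟨w, fun g => ?_⟩
  obtain ⟨L, hL⟩ := hx.1 g
  rwa [tendsto_nhds_unique ((h.map g).tendsto hL) (hw g)] at hL

end IsConvexBlockSeq

theorem NontrivWeaklyCauchy.not_cauchySeq [CompleteSpace X] {x : ℕ → X}
    (hx : NontrivWeaklyCauchy x) : ¬ CauchySeq x := fun hc =>
  let ⟨L, hL⟩ := cauchySeq_tendsto_of_complete hc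
  hx.2 ⟨L, fun g => (g.continuous.tendsto L).comp hL⟩

theorem exists_strictMono_le_dist_succ_of_not_cauchySeq {α : Type*} [PseudoMetricSpace α]
    {u : ℕ → α} (hu : ¬ CauchySeq u) :
    ∃ ε > 0, ∃ φ : ℕ → ℕ, StrictMono φ ∧ ∀ k, ε ≤ dist (u (φ k)) (u (φ (k + 1))) := by
  simp only [Metric.cauchySeq_iff', not_forall, not_exists, not_lt] at hu
  obtain ⟨ε, hε, hfar⟩ := hu
  have hnext : ∀ N, ∃ n, N < n ∧ ε ≤ dist (u N) (u n) := fun N => by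
    obtain ⟨n, hn, hd⟩ := hfar N
    refine ⟨n, lt_of_le_of_ne hn ?_, by rwa [dist_comm]⟩
    rintro rfl
    rw [dist_self] at hd
    linarith
  choose f hf using hnext
  refine ⟨ε, hε, fun k => f^[k] 0, strictMono_nat_of_lt_succ fun k => ?_, fun k => ?_⟩
  all_goals simp only [Function.iterate_succ_apply']
  exacts [(hf _).1, (hf _).2]

theorem Finset.le_biSup_of_mem {ι α : Type*} [ConditionallyCompleteLattice α] {s : Finset ι}
    (f : ι → α) {i : ι} (hi : i ∈ s) : f i ≤ ⨆ j ∈ s, f j :=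
  le_ciSup₂ (f := fun j (_ : j ∈ s) => f j) ((s.finite_toSet.image f).bddAbove.mono <|
    Set.iUnion_subset fun _ => Set.range_subset_iff.2 fun hj =>
      Set.mem_image_of_mem f (mem_coe.2 hj)) i hi

theorem Real.biSup_finset_le {ι : Type*} {s : Finset ι} {f : ι → ℝ} {B : ℝ} (hB : 0 ≤ B)
    (h : ∀ i ∈ s, f i ≤ B) : ⨆ i ∈ s, f i ≤ B :=
  Real.iSup_le (fun i => Real.iSup_le (h i) hB) hB

theorem Finset.sum_range_two_mul {M : Type*} [AddCommMonoid M] (f : ℕ → M) (n : ℕ) :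
    ∑ j ∈ range (2 * n), f j = ∑ i ∈ range n, (f (2 * i) + f (2 * i + 1)) := by
  induction n with
  | zero => simp
  | succ n ih =>
    rw [show 2 * (n + 1) = 2 * n + 1 + 1 by ring, sum_range_succ, sum_range_succ, ih,
      sum_range_succ, add_assoc]

def alternatingDouble (a : ℕ → ℝ) (j : ℕ) : ℝ := (-1) ^ j * a (j / 2)

section alternatingDouble

variable (a : ℕ → ℝ) (n : ℕ)

@[simp]
theorem alternatingDouble_two_mul : alternatingDouble a (2 * n) = a n := by
  simp [alternatingDouble]

@[simp]
theorem alternatingDouble_two_mul_add_one : alternatingDouble a (2 * n + 1) = -a n := by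
  simp [alternatingDouble, pow_succ, Nat.add_div]

theorem sum_range_two_mul_alternatingDouble :
    ∑ j ∈ range (2 * n), alternatingDouble a j = 0 := by
  simp [sum_range_two_mul]

theorem sum_range_two_mul_add_one_alternatingDouble :
    ∑ j ∈ range (2 * n + 1), alternatingDouble a j = a n := by
  simp [sum_range_succ, sum_range_two_mul_alternatingDouble]

theorem biSup_abs_partialSum_alternatingDouble :
    ⨆ m ∈ range (2 * n + 1), |∑ j ∈ range m, alternatingDouble a j| = ⨆ i ∈ range n, |a i| := by
  have hnonneg : 0 ≤ ⨆ i ∈ range n, |a i| :=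
    Real.iSup_nonneg fun _ => Real.iSup_nonneg fun _ => abs_nonneg _
  apply le_antisymm
  · refine Real.biSup_finset_le hnonneg fun m hm => ?_
    obtain ⟨i, rfl | rfl⟩ := Nat.even_or_odd' m
    · simpa [sum_range_two_mul_alternatingDouble] using hnonneg
    · rw [sum_range_two_mul_add_one_alternatingDouble]
      exact le_biSup_of_mem (fun i => |a i|) (by simp only [mem_range] at hm ⊢; omega)
  · refine Real.biSup_finset_le (Real.iSup_nonneg fun _ => Real.iSup_nonneg fun _ =>
      abs_nonneg _) fun i hi => ?_
    rw [← sum_range_two_mul_add_one_alternatingDouble a i]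
    exact le_biSup_of_mem (fun m => |∑ j ∈ range m, alternatingDouble a j|)
      (by simp only [mem_range] at hi ⊢; omega)

end alternatingDouble

theorem StrictMono.interleave {m k : ℕ → ℕ} (hm : StrictMono m) (hk : StrictMono k) :
    StrictMono fun j => m (2 * k (j / 2) + j % 2) := by
  refine hm.comp fun p q hpq => ?_
  rcases (Nat.div_le_div_right (c := 2) hpq.le).lt_or_eq with h | h
  · have := hk h; omega
  · rw [h]; omega

theorem GeneratesSummingSM.generatesC0SM_sub {z : ℕ → X} (hz : GeneratesSummingSM z)
    {m : ℕ → ℕ} (hm : StrictMono m) :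
    GeneratesC0SM fun k => z (m (2 * k)) - z (m (2 * k + 1)) := by
  obtain ⟨C, hC1, hC⟩ := hz
  refine ⟨C, hC1, fun n k hk hn a => ?_⟩
  have hκ0 : 2 * n ≤ m (2 * k 0) := by have := hm.le_apply (x := 2 * k 0); omega
  have hsum : ∑ j ∈ range (2 * n), alternatingDouble a j • z (m (2 * k (j / 2) + j % 2)) =
      ∑ i ∈ range n, a i • (z (m (2 * k i)) - z (m (2 * k i + 1))) := by
    rw [sum_range_two_mul]
    refine sum_congr rfl fun i _ => ?_
    simp [Nat.add_div, sub_eq_add_neg]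
  have := hC (2 * n) _ (hm.interleave hk) (by simpa using hκ0) (alternatingDouble a)
  rwa [hsum, biSup_abs_partialSum_alternatingDouble] at this

/-- Suppose every non-trivial weakly Cauchy sequence in `X` has a convex
block sequence generating the summing basis of `c₀` as a spreading model, and
`T` is a bounded operator sending every sequence generating the unit vector
basis of `c₀` as a spreading model to a norm null sequence.  Then no sequence
`(x_k)` can have both `(x_k)` and `(T x_k)` non-trivial weakly Cauchy. -/
theorem no_nontrivial_weakly_cauchy_pair
    [CompleteSpace X]
    (hX : ∀ x : ℕ → X, NontrivWeaklyCauchy x →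
      ∃ z : ℕ → X, IsConvexBlockSeq x z ∧ GeneratesSummingSM z)
    (T : X →L[ℝ] X)
    (hT : ∀ y : ℕ → X, GeneratesC0SM y → NormNull (fun k => T (y k)))
    (x : ℕ → X) (hx : NontrivWeaklyCauchy x)
    (hTx : NontrivWeaklyCauchy fun k => T (x k)) :
    False := by
  obtain ⟨z, hzx, hz⟩ := hX x hx
  have hTz : NontrivWeaklyCauchy fun k => T (z k) := (hzx.map T).nontrivWeaklyCauchy hTx
  obtain ⟨ε, hε, φ, hφ, hsep⟩ :=
    exists_strictMono_le_dist_succ_of_not_cauchySeq hTz.not_cauchySeq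
  obtain ⟨k, hk⟩ := ((hT _ (hz.generatesC0SM_sub hφ)).eventually (gt_mem_nhds hε)).exists
  have hfar := hsep (2 * k)
  rw [dist_eq_norm, ← map_sub] at hfar
  exact hk.not_ge hfar
end
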